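/- Let G be a finite triangle-free simple graph without isolated vertices such that γ^∞(G) = γ(G). Then there exists an eternal guard family F of size γ^∞(G) in G and a set D ∈ F such that the external private neighborhood epn(v,D) is nonempty for every v ∈ D. -/

import Mathlib

/-!
Take a minimum eternal guard family `F` and, among its sets, a set `D` with the fewest guards
having no neighbour in `D`. As `|D| = γ(G)`, `D` is a minimal dominating set, so a guard `v` with
`epn(v, D) = ∅` has no neighbour in `D`. Attack a neighbour `u` of `v`: it lies outside `D` and,
not being private to `v`, has a second neighbour in `D`. The guard `x` answering the attack has no
external private neighbour either, since the new set `D - x + u` could only dominate one through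
`u`, closing a triangle; hence `x` too has no neighbour in `D`. In `D - x + u` the vertex `u` is
not isolated and no vertex becomes isolated, so it has fewer isolated guards than `D`.
-/

variable {V : Type*}

/-- `D` is a dominating set of `G`: every vertex outside `D` has a neighbor in `D`. -/
def Dominates (G : SimpleGraph V) (D : Finset V) : Prop :=
  ∀ v : V, v ∉ D → ∃ u ∈ D, G.Adj u v

/-- The domination number `γ(G)`. -/
noncomputable def domNum (G : SimpleGraph V) : ℕ :=
  sInf {k | ∃ D : Finset V, Dominates G D ∧ D.card = k}

/-- An eternal guard family of size `k` in `G`. -/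
def IsEternalGuardFamily [DecidableEq V] (G : SimpleGraph V) (k : ℕ)
    (F : Set (Finset V)) : Prop :=
  F.Nonempty ∧ (∀ D ∈ F, Dominates G D ∧ D.card = k) ∧
    ∀ D ∈ F, ∀ r : V, r ∉ D → ∃ v ∈ D, G.Adj v r ∧ insert r (D.erase v) ∈ F

/-- The eternal domination number `γ^∞(G)`. -/
noncomputable def eternalDomNum [DecidableEq V] (G : SimpleGraph V) : ℕ :=
  sInf {k | 1 ≤ k ∧ ∃ F : Set (Finset V), IsEternalGuardFamily G k F}

/-- An m-eternal guard family of size `k` in `G`. -/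
def IsMEternalGuardFamily (G : SimpleGraph V) (k : ℕ) (F : Set (Finset V)) : Prop :=
  F.Nonempty ∧ (∀ D ∈ F, Dominates G D ∧ D.card = k) ∧
    ∀ D ∈ F, ∀ r : V, r ∉ D → ∃ D' ∈ F, r ∈ D' ∧
      ∃ g : V → V, Set.BijOn g ↑D ↑D' ∧ ∀ v ∈ D, g v = v ∨ G.Adj v (g v)

/-- The m-eternal domination number `γ_m^∞(G)`. -/
noncomputable def mEternalDomNum (G : SimpleGraph V) : ℕ :=
  sInf {k | 1 ≤ k ∧ ∃ F : Set (Finset V), IsMEternalGuardFamily G k F}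

/-- `s` is an independent set of vertices of `G`. -/
def IsIndepFinset (G : SimpleGraph V) (s : Finset V) : Prop :=
  ∀ a ∈ s, ∀ b ∈ s, a ≠ b → ¬ G.Adj a b

/-- The independence number `α(G)`. -/
noncomputable def indepNum (G : SimpleGraph V) : ℕ :=
  sSup {k | ∃ s : Finset V, IsIndepFinset G s ∧ s.card = k}

/-- The clique covering number `θ(G)`: the least `t` such that the vertices can be
partitioned into `t` classes each inducing a complete subgraph. -/
noncomputable def cliqueCoverNum (G : SimpleGraph V) : ℕ :=
  sInf {t | ∃ f : V → Fin t, ∀ a b : V, f a = f b → a ≠ b → G.Adj a b}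

/-- The external private neighborhood of `v ∈ D` with respect to `D`: the neighbors of
`v` lying outside the closed neighborhood of `D \ {v}`. -/
def epn [DecidableEq V] (G : SimpleGraph V) (v : V) (D : Finset V) : Set V :=
  {u | G.Adj v u ∧ ∀ w ∈ D.erase v, u ≠ w ∧ ¬ G.Adj w u}

open Classical in
noncomputable def isolatedIn (G : SimpleGraph V) (D : Finset V) : Finset V :=
  D.filter fun y => ∀ w ∈ D, ¬ G.Adj y w

lemma mem_isolatedIn {G : SimpleGraph V} {D : Finset V} {y : V} :
    y ∈ isolatedIn G D ↔ y ∈ D ∧ ∀ w ∈ D, ¬ G.Adj y w := by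
  classical
  simp [isolatedIn]

section

variable [DecidableEq V] {G : SimpleGraph V}

lemma isEternalGuardFamily_univ [Fintype V] (G : SimpleGraph V) :
    IsEternalGuardFamily G (Fintype.card V) {Finset.univ} := by
  refine ⟨Set.singleton_nonempty _, ?_, ?_⟩ <;> rintro D rfl
  · exact ⟨fun v hv => absurd (Finset.mem_univ v) hv, Finset.card_univ⟩
  · exact fun r hr => absurd (Finset.mem_univ r) hr

lemma exists_isEternalGuardFamily_eternalDomNum [Fintype V] (G : SimpleGraph V) :
    ∃ F, IsEternalGuardFamily G (eternalDomNum G) F := by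
  rcases isEmpty_or_nonempty V with hV | hV
  · -- `eternalDomNum G` is then `sInf ∅ = 0`, the size of the only guard family `{∅}`.
    suffices h : eternalDomNum G = Fintype.card V from ⟨_, h ▸ isEternalGuardFamily_univ G⟩
    rw [Fintype.card_eq_zero, eternalDomNum, Nat.sInf_eq_zero]
    refine Or.inr (Set.eq_empty_of_forall_notMem ?_)
    rintro k ⟨hk, F, ⟨D, hD⟩, hdom, -⟩
    have hcard := (hdom D hD).2
    rw [Finset.eq_empty_of_isEmpty D, Finset.card_empty] at hcard
    omega
  · have hne : {k | 1 ≤ k ∧ ∃ F, IsEternalGuardFamily G k F}.Nonempty :=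
      ⟨_, Fintype.card_pos, _, isEternalGuardFamily_univ G⟩
    exact (Nat.sInf_mem hne).2

lemma IsEternalGuardFamily.not_dominates_erase {F : Set (Finset V)} {D : Finset V} {x : V}
    (hF : IsEternalGuardFamily G (domNum G) F) (hD : D ∈ F) (hx : x ∈ D) :
    ¬ Dominates G (D.erase x) := by
  intro hdom
  have hle : domNum G ≤ (D.erase x).card := Nat.sInf_le ⟨_, hdom, rfl⟩
  rw [Finset.card_erase_of_mem hx, (hF.2.1 D hD).2] at hle
  have hpos : 0 < D.card := Finset.card_pos.2 ⟨x, hx⟩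
  rw [(hF.2.1 D hD).2] at hpos
  omega

lemma epn_nonempty_or_isolated {D : Finset V} {x : V} (hD : Dominates G D)
    (hmin : ¬ Dominates G (D.erase x)) :
    (epn G x D).Nonempty ∨ ∀ w ∈ D, ¬ G.Adj x w := by
  obtain ⟨z, hz, hzD⟩ : ∃ z ∉ D.erase x, ∀ w ∈ D.erase x, ¬ G.Adj w z := by
    simpa [Dominates] using hmin
  by_cases hzx : z = x
  · subst hzx
    right
    intro w hw hzw
    exact hzD w (Finset.mem_erase.2 ⟨hzw.ne.symm, hw⟩) hzw.symm
  · have hzD' : z ∉ D := fun h => hz (Finset.mem_erase.2 ⟨hzx, h⟩)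
    obtain ⟨u, hu, huz⟩ := hD z hzD'
    obtain rfl : u = x := by
      by_contra hux
      exact hzD u (Finset.mem_erase.2 ⟨hux, hu⟩) huz
    exact Or.inl ⟨z, huz, fun w hw => ⟨fun h => hz (h ▸ hw), hzD w hw⟩⟩

lemma epn_eq_empty_of_dominates_swap (htf : G.CliqueFree 3) {D : Finset V} {x u t : V}
    (hxu : G.Adj x u) (ht : t ∈ D.erase x) (htu : G.Adj t u)
    (hD' : Dominates G (insert u (D.erase x))) :
    epn G x D = ∅ := by
  refine Set.eq_empty_of_forall_notMem fun z ⟨hxz, hzpriv⟩ => ?_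
  have hzu : z ≠ u := by
    rintro rfl
    exact (hzpriv t ht).2 htu
  have hzD' : z ∉ insert u (D.erase x) := by
    rw [Finset.mem_insert, not_or]
    exact ⟨hzu, fun h => (hzpriv z h).1 rfl⟩
  obtain ⟨y, hy, hyz⟩ := hD' z hzD'
  rcases Finset.mem_insert.1 hy with rfl | hy
  · exact htf {x, y, z} (SimpleGraph.is3Clique_triple_iff.2 ⟨hxu, hxz, hyz⟩)
  · exact (hzpriv y hy).2 hyz

lemma card_isolatedIn_insert_erase_lt {D : Finset V} {x u t : V} (hx : x ∈ isolatedIn G D)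
    (hu : u ∉ D) (ht : t ∈ D.erase x) (htu : G.Adj t u) :
    (isolatedIn G (insert u (D.erase x))).card < (isolatedIn G D).card := by
  refine (Finset.card_le_card fun y hy => ?_).trans_lt (Finset.card_erase_lt_of_mem hx)
  rw [mem_isolatedIn] at hx hy
  obtain ⟨hyD', hyiso⟩ := hy
  rcases Finset.mem_insert.1 hyD' with rfl | hyDx
  · exact absurd htu.symm (hyiso t (Finset.mem_insert_of_mem ht))
  · obtain ⟨hyx, hyD⟩ := Finset.mem_erase.1 hyDx
    refine Finset.mem_erase.2 ⟨hyx, mem_isolatedIn.2 ⟨hyD, fun w hw => ?_⟩⟩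
    rcases eq_or_ne w x with rfl | hwx
    · exact fun h => hx.2 y hyD h.symm
    · exact hyiso w (Finset.mem_insert_of_mem (Finset.mem_erase.2 ⟨hwx, hw⟩))

lemma exists_card_isolatedIn_lt (htf : G.CliqueFree 3) (hiso : ∀ v : V, ∃ u, G.Adj u v)
    {k : ℕ} {F : Set (Finset V)} (hF : IsEternalGuardFamily G k F) {D : Finset V} (hD : D ∈ F)
    (hmin : ∀ x ∈ D, ¬ Dominates G (D.erase x)) {v : V} (hv : v ∈ D) (hepn : epn G v D = ∅) :
    ∃ D' ∈ F, (isolatedIn G D').card < (isolatedIn G D).card := by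
  have hdom : Dominates G D := (hF.2.1 D hD).1
  have hviso : ∀ w ∈ D, ¬ G.Adj v w := by
    simpa [hepn] using epn_nonempty_or_isolated hdom (hmin v hv)
  obtain ⟨u, hu⟩ := hiso v
  have huD : u ∉ D := fun h => hviso u h hu.symm
  obtain ⟨w, hw, hwu⟩ : ∃ w ∈ D.erase v, G.Adj w u := by
    have hu' : u ∉ epn G v D := hepn ▸ Set.notMem_empty u
    simp only [epn, Set.mem_ofPred_eq, not_and, not_forall] at hu'
    obtain ⟨w, hw, hwu⟩ := hu' hu.symm
    exact ⟨w, hw, not_not.1 (hwu fun h => huD (h ▸ (Finset.mem_erase.1 hw).2))⟩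
  obtain ⟨x, hxD, hxu, hD'⟩ := hF.2.2 D hD u huD
  obtain ⟨t, ht, htu⟩ : ∃ t ∈ D.erase x, G.Adj t u := by
    rcases eq_or_ne x v with rfl | hxv
    · exact ⟨w, hw, hwu⟩
    · exact ⟨v, Finset.mem_erase.2 ⟨hxv.symm, hv⟩, hu.symm⟩
  have hxepn := epn_eq_empty_of_dominates_swap htf hxu ht htu (hF.2.1 _ hD').1
  have hxiso : ∀ w ∈ D, ¬ G.Adj x w := by
    simpa [hxepn] using epn_nonempty_or_isolated hdom (hmin x hxD)
  exact ⟨_, hD', card_isolatedIn_insert_erase_lt (mem_isolatedIn.2 ⟨hxD, hxiso⟩) huD ht htu⟩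

end

/-- if `G` is triangle-free without isolated vertices and
`γ^∞(G) = γ(G)`, then `G` has a minimum eternal guard family containing a set `D`
with `epn(v, D) ≠ ∅` for every `v ∈ D`. -/
theorem stmt16 [Fintype V] [DecidableEq V] (G : SimpleGraph V)
    (htf : G.CliqueFree 3)
    (hiso : ∀ v : V, ∃ u, G.Adj u v)
    (heq : eternalDomNum G = domNum G) :
    ∃ F : Set (Finset V), IsEternalGuardFamily G (eternalDomNum G) F ∧
      ∃ D ∈ F, ∀ v ∈ D, (epn G v D).Nonempty := by
  obtain ⟨F, hF⟩ := exists_isEternalGuardFamily_eternalDomNum G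
  have hFγ : IsEternalGuardFamily G (domNum G) F := heq ▸ hF
  obtain ⟨D, hD, hDmin⟩ :=
    Set.exists_min_image F (fun D => (isolatedIn G D).card) (Set.toFinite F) hF.1
  refine ⟨F, hF, D, hD, fun v hv => Set.nonempty_iff_ne_empty.2 fun hepn => ?_⟩
  obtain ⟨D', hD', hlt⟩ := exists_card_isolatedIn_lt htf hiso hF hD
    (fun x hx => hFγ.not_dominates_erase hD hx) hv hepn
  exact (hDmin D' hD').not_gt hlt
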